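/- Let A ∈ ℝ^{m×m} be symmetric positive semi-definite of rank r_A ≥ 1, with orthonormal eigenvectors u_1, …, u_{r_A} and eigenvalues λ_1 ≥ … ≥ λ_{r_A} > 0, and set U = [u_1, …, u_{r_A}]. Fix an integer r with r_A ≤ r ≤ m and ρ ∈ {0, 1, …, r_A − 1}, and set A_ρ = Σ_{i=1}^{ρ} λ_i u_i u_iᵀ (with A_0 = 0), which is a best rank-ρ approximation of A in Frobenius norm. Suppose X ∈ St(m,r) and Θ ∈ ℝ^{r×r} is symmetric with XΘXᵀ = A_ρ and Tr(XᵀUUᵀX) = ρ. Then (X,Θ) is a saddle point of f_∞(X,Θ) = (1/4)‖XΘXᵀ − A‖_F² over St(m,r) × {symmetric r×r matrices}; precisely: (a) ∇_Θ f_∞(X,Θ) = (1/2)Xᵀ(XΘXᵀ − A)X = 0, and the Riemannian gradient (I_m − XXᵀ)∇_X f_∞(X,Θ) + (X/2)(Xᵀ∇_X f_∞(X,Θ) − ∇_X f_∞(X,Θ)ᵀX) = 0, where ∇_X f_∞(X,Θ) = (XΘXᵀ − A)XΘ; and (b) for every ν ∈ (0, λ_{r_A}) there exist (X₊, Θ₊)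 and (X₋, Θ₋) with X₊ᵀX₊ = X₋ᵀX₋ = I_r, Θ₊ and Θ₋ symmetric, √(‖X₊ − X‖_F² + ‖Θ₊ − Θ‖_F²) ≤ ν, √(‖X₋ − X‖_F² + ‖Θ₋ − Θ‖_F²) ≤ ν, and f_∞(X₋, Θ₋) < f_∞(X, Θ) < f_∞(X₊, Θ₊). -/

import Mathlib

open Matrix MeasureTheory ProbabilityTheory BigOperators

noncomputable section

/-- Frobenius norm of a real matrix. -/
def frob {m n : ℕ} (M : Matrix (Fin m) (Fin n) ℝ) : ℝ :=
  Real.sqrt (∑ i, ∑ j, (M i j) ^ 2)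

/-- Euclidean norm of a vector in `ℝⁿ`. -/
def vnorm {n : ℕ} (v : Fin n → ℝ) : ℝ :=
  Real.sqrt (∑ i, (v i) ^ 2)

/-- Spectral norm (operator 2-norm) of a real matrix. -/
def spec {m n : ℕ} (M : Matrix (Fin m) (Fin n) ℝ) : ℝ :=
  ‖LinearMap.toContinuousLinearMap (Matrix.toEuclideanLin M)‖

theorem isHermitian_tmul {m n : ℕ} (M : Matrix (Fin m) (Fin n) ℝ) :
    (Mᵀ * M).IsHermitian := by
  simpa [Matrix.conjTranspose_eq_transpose_of_trivial] using
    Matrix.isHermitian_conjTranspose_mul_self M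

theorem posSemidef_tmul {m n : ℕ} (M : Matrix (Fin m) (Fin n) ℝ) :
    (Mᵀ * M).PosSemidef := by
  simpa [Matrix.conjTranspose_eq_transpose_of_trivial] using
    Matrix.posSemidef_conjTranspose_mul_self M

/-- The `i`-th largest singular value (1-indexed) of a real matrix, i.e. the square root of the
`i`-th largest eigenvalue of `MᵀM`; junk value `0` when `i` is out of range. -/
def svalue {m n : ℕ} (M : Matrix (Fin m) (Fin n) ℝ) (i : ℕ) : ℝ :=
  if h : 1 ≤ i ∧ i ≤ n then
    Real.sqrt ((isHermitian_tmul M).eigenvalues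
      (Tuple.sort (isHermitian_tmul M).eigenvalues ⟨n - i, by omega⟩))
  else 0

/-- Membership in the Stiefel manifold `St(m,r)`. -/
def Stiefel {m r : ℕ} (X : Matrix (Fin m) (Fin r) ℝ) : Prop :=
  Xᵀ * X = 1

/-- The Loewner order on (symmetric) real matrices: `A ⪯ B`. -/
def loewnerLE {m : ℕ} (A B : Matrix (Fin m) (Fin m) ℝ) : Prop :=
  (B - A).PosSemidef

/-- The inverse of the positive semidefinite square root of a matrix (junk value `0` when the
matrix is not positive semidefinite). -/
def sqrtInv {r : ℕ} (S : Matrix (Fin r) (Fin r) ℝ) : Matrix (Fin r) (Fin r) ℝ :=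
  haveI := Classical.propDecidable S.PosSemidef
  if h : S.PosSemidef then
    ((h.1.eigenvectorUnitary : Matrix (Fin r) (Fin r) ℝ) *
      Matrix.diagonal (fun i => Real.sqrt (h.1.eigenvalues i)) *
      (star h.1.eigenvectorUnitary : Matrix (Fin r) (Fin r) ℝ))⁻¹ else 0

/-- The linear sensing map `𝓜` determined by feature matrices `M_i`:
`𝓜(B)_i = Tr(M_iᵀ B)`. -/
def calM {m n : ℕ} (Ms : Fin n → Matrix (Fin m) (Fin m) ℝ)
    (B : Matrix (Fin m) (Fin m) ℝ) : Fin n → ℝ :=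
  fun i => ((Ms i)ᵀ * B).trace

/-- The adjoint `𝓜*` of the sensing map: `𝓜*(y) = ∑ i, y_i M_i`. -/
def calMadj {m n : ℕ} (Ms : Fin n → Matrix (Fin m) (Fin m) ℝ)
    (y : Fin n → ℝ) : Matrix (Fin m) (Fin m) ℝ :=
  ∑ i, y i • Ms i

/-- `(𝓜*𝓜 − 𝓘)(B)`. -/
def calE {m n : ℕ} (Ms : Fin n → Matrix (Fin m) (Fin m) ℝ)
    (B : Matrix (Fin m) (Fin m) ℝ) : Matrix (Fin m) (Fin m) ℝ :=
  calMadj Ms (calM Ms B) - B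

/-- The `(s, δ)`-restricted isometry property for the sensing map determined by `Ms`. -/
def IsRIP {m n : ℕ} (Ms : Fin n → Matrix (Fin m) (Fin m) ℝ) (s : ℕ) (δ : ℝ) : Prop :=
  ∀ B : Matrix (Fin m) (Fin m) ℝ, B.IsSymm → B.rank ≤ s →
    (1 - δ) * frob B ^ 2 ≤ vnorm (calM Ms B) ^ 2 ∧
      vnorm (calM Ms B) ^ 2 ≤ (1 + δ) * frob B ^ 2

/-- The Riemannian gradient on the Stiefel manifold obtained from the Euclidean gradient `g`
at the point `X`. -/
def Rgrad {m r : ℕ} (X g : Matrix (Fin m) (Fin r) ℝ) : Matrix (Fin m) (Fin r) ℝ :=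
  (1 - X * Xᵀ) * g + (2⁻¹ : ℝ) • (X * (Xᵀ * g - gᵀ * X))

/-- One step of Riemannian gradient descent (with `μ = 2`) for the weight-normalized
matrix sensing problem. -/
def RGDstep {m r n : ℕ} (Ms : Fin n → Matrix (Fin m) (Fin m) ℝ)
    (A : Matrix (Fin m) (Fin m) ℝ) (η : ℝ)
    (p : Matrix (Fin m) (Fin r) ℝ × Matrix (Fin r) (Fin r) ℝ) :
    Matrix (Fin m) (Fin r) ℝ × Matrix (Fin r) (Fin r) ℝ :=
  let X := p.1
  let Θ := p.2
  let Gt := calMadj Ms (calM Ms (X * Θ * Xᵀ - A)) * X * Θ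
  let G := Rgrad X Gt
  let X' := (X - η • G) * sqrtInv (1 + η ^ 2 • (Gᵀ * G))
  let Θ' := X'ᵀ * A * X' - X'ᵀ * calE Ms (X' * Θ * X'ᵀ - A) * X'
  (X', Θ')

/-- The standard Gaussian ensemble on `m × r` real matrices (i.i.d. `N(0,1)` entries). -/
def gaussianEnsemble (m r : ℕ) : Measure (Fin m → Fin r → ℝ) :=
  Measure.pi fun _ : Fin m => Measure.pi fun _ : Fin r => gaussianReal 0 1

/-!
Since `X Θ Xᵀ = A_ρ`, the eigenvectors `u_i = U.col i` with `i < ρ` (indices from `0`) lie in the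
range of `X`, so `‖Xᵀ u_i‖² = 1` for them; as all these squared norms sum to
`Tr(Xᵀ U Uᵀ X) = ρ`, the others vanish. Hence the residual `X Θ Xᵀ - A = A_ρ - A` annihilates
`X`, and both gradients vanish.

For a unit vector `z` and a Stiefel matrix `Y` with `Y Θ Yᵀ = X Θ Xᵀ`, passing to
`(Y, Θ + s z zᵀ)` adds `s q qᵀ` to `X Θ Xᵀ`, where `q = Y z`, and so changes the loss by
`(2 s qᵀ(X Θ Xᵀ - A) q + s²) / 4`. With `Y = X` the linear term vanishes and the loss goes up.
For a decrease take `z` in the kernel of `Θ = Xᵀ A_ρ X`, whose rank is at most `ρ < r`, and let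
`Y` turn the direction `X z` by a small angle `t` towards `u_ρ`, which is orthogonal to the range
of `X`: then `qᵀ(A_ρ - A) q = -λ_ρ sin² t`, and the loss drops once `0 < s < 2 λ_ρ sin² t`.
-/

open Matrix

section Frobenius

variable {m n : ℕ}

lemma trace_transpose_mul_eq_sum (M N : Matrix (Fin m) (Fin n) ℝ) :
    (Mᵀ * N).trace = ∑ i, ∑ j, M i j * N i j := by
  simp only [trace, diag, mul_apply, transpose_apply]
  exact Finset.sum_comm

lemma frob_sq (M : Matrix (Fin m) (Fin n) ℝ) : frob M ^ 2 = ∑ i, ∑ j, M i j ^ 2 :=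
  Real.sq_sqrt (by positivity)

lemma frob_add_sq (M N : Matrix (Fin m) (Fin n) ℝ) :
    frob (M + N) ^ 2 = frob M ^ 2 + 2 * (Mᵀ * N).trace + frob N ^ 2 := by
  simp only [frob_sq, trace_transpose_mul_eq_sum, Matrix.add_apply, Finset.mul_sum,
    ← Finset.sum_add_distrib]
  congr! 2 with i - j -
  ring

lemma frob_smul_sq (s : ℝ) (M : Matrix (Fin m) (Fin n) ℝ) :
    frob (s • M) ^ 2 = s ^ 2 * frob M ^ 2 := by
  simp only [frob_sq, Matrix.smul_apply, smul_eq_mul, mul_pow, Finset.mul_sum]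

lemma frob_vecMulVec_sq (a : Fin m → ℝ) (b : Fin n → ℝ) :
    frob (vecMulVec a b) ^ 2 = (a ⬝ᵥ a) * (b ⬝ᵥ b) := by
  simp only [frob_sq, vecMulVec_apply, dotProduct, Finset.sum_mul_sum]
  congr! 2 with i - j -
  ring

lemma frob_add_smul_vecMulVec_self_sq (E : Matrix (Fin m) (Fin m) ℝ) (s : ℝ) {q : Fin m → ℝ}
    (hq : q ⬝ᵥ q = 1) :
    frob (E + s • vecMulVec q q) ^ 2 = frob E ^ 2 + 2 * s * (q ⬝ᵥ E *ᵥ q) + s ^ 2 := by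
  have hcross : (Eᵀ * vecMulVec q q).trace = q ⬝ᵥ E *ᵥ q := by
    rw [mul_vecMulVec, trace_vecMulVec, dotProduct_comm, dotProduct_mulVec, vecMul_transpose,
      dotProduct_comm]
  rw [frob_add_sq, frob_smul_sq, frob_vecMulVec_sq, hq, Matrix.mul_smul, trace_smul, hcross,
    smul_eq_mul]
  ring

end Frobenius

lemma Fin.eq_zero_of_sum_eq_of_eq_one_of_lt {n ρ : ℕ} (hρ : ρ ≤ n) {g : Fin n → ℝ}
    (hg0 : ∀ i, 0 ≤ g i) (hg1 : ∀ i : Fin n, ↑i < ρ → g i = 1) (hsum : ∑ i, g i = ρ)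
    {i : Fin n} (hi : ρ ≤ ↑i) : g i = 0 := by
  have hlow : ∑ j ∈ Finset.univ.filter (fun j : Fin n => ↑j < ρ), g j = ρ := by
    rw [Finset.sum_congr rfl fun j hj => hg1 j (Finset.mem_filter.mp hj).2, Finset.sum_const,
      Fin.card_filter_val_lt, min_eq_right hρ, nsmul_one]
  have hhigh : ∑ j ∈ Finset.univ.filter (fun j : Fin n => ¬ ↑j < ρ), g j = 0 := by
    linarith [Finset.sum_filter_add_sum_filter_not Finset.univ (fun j : Fin n => ↑j < ρ) g]
  exact (Finset.sum_eq_zero_iff_of_nonneg fun j _ => hg0 j).mp hhigh i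
    (Finset.mem_filter.mpr ⟨Finset.mem_univ i, not_lt.mpr hi⟩)

section Stiefel

variable {m n r : ℕ}

lemma Stiefel.mulVec_dotProduct_mulVec {X : Matrix (Fin m) (Fin r) ℝ} (hX : Stiefel X)
    (v w : Fin r → ℝ) : X *ᵥ v ⬝ᵥ X *ᵥ w = v ⬝ᵥ w := by
  rw [dotProduct_mulVec, vecMul_mulVec, ← mulVec_transpose, hX, transpose_one, one_mulVec]

lemma Stiefel.col_dotProduct_col {U : Matrix (Fin m) (Fin n) ℝ} (hU : Stiefel U) (i : Fin n) :
    U.col i ⬝ᵥ U.col i = 1 := by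
  rw [← mulVec_single_one, hU.mulVec_dotProduct_mulVec, dotProduct_single, mul_one,
    Pi.single_eq_same]

lemma Stiefel.mul_diagonal_mul_transpose_mulVec_col {U : Matrix (Fin m) (Fin n) ℝ}
    (hU : Stiefel U) (d : Fin n → ℝ) (i : Fin n) :
    (U * diagonal d * Uᵀ) *ᵥ U.col i = d i • U.col i := by
  rw [← mulVec_single_one, mulVec_mulVec, Matrix.mul_assoc, Matrix.mul_assoc, hU,
    Matrix.mul_one, ← mulVec_mulVec, diagonal_mulVec_single, mul_one, ← mulVec_smul,
    ← Pi.single_smul, smul_eq_mul, mul_one]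

lemma mul_diagonal_mul_transpose_mul_eq_zero {U : Matrix (Fin m) (Fin n) ℝ}
    {X : Matrix (Fin m) (Fin r) ℝ} {c : Fin n → ℝ} (h : ∀ i, c i ≠ 0 → Xᵀ *ᵥ U.col i = 0) :
    U * diagonal c * Uᵀ * X = 0 := by
  have hcX : diagonal c * (Uᵀ * X) = 0 := by
    ext i j
    rw [diagonal_mul, mul_apply_eq_vecMul, ← mulVec_transpose]
    by_cases hc : c i = 0
    · rw [hc, zero_mul, Matrix.zero_apply]
    · exact mul_eq_zero_of_right _ (congrFun (h i hc) j)
  rw [Matrix.mul_assoc, Matrix.mul_assoc, hcX, Matrix.mul_zero]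

lemma Stiefel.transpose_mulVec_col_eq_zero {X : Matrix (Fin m) (Fin r) ℝ} (hX : Stiefel X)
    {U : Matrix (Fin m) (Fin n) ℝ} (hU : Stiefel U) {Θ : Matrix (Fin r) (Fin r) ℝ}
    {d : Fin n → ℝ} {ρ : ℕ} (hρ : ρ ≤ n) (hd : ∀ i : Fin n, ↑i < ρ → d i ≠ 0)
    (hfac : X * Θ * Xᵀ = U * diagonal d * Uᵀ) (htr : (Xᵀ * U * Uᵀ * X).trace = ρ)
    {i : Fin n} (hi : ρ ≤ ↑i) : Xᵀ *ᵥ U.col i = 0 := by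
  have hproj : X * Xᵀ * (X * Θ * Xᵀ) = X * Θ * Xᵀ := by
    simp only [← Matrix.mul_assoc]
    rw [Matrix.mul_assoc X Xᵀ X, hX, Matrix.mul_one]
  have hrange : ∀ j : Fin n, ↑j < ρ → X *ᵥ (Xᵀ *ᵥ U.col j) = U.col j := fun j hj => by
    have hj' := congrArg (· *ᵥ U.col j) hproj
    rw [hfac, ← mulVec_mulVec, hU.mul_diagonal_mul_transpose_mulVec_col, mulVec_smul,
      ← mulVec_mulVec] at hj'
    exact smul_right_injective _ (hd j hj) hj'
  have hrow : ∀ j, (Uᵀ * X) j = Xᵀ *ᵥ U.col j := fun j => by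
    rw [mul_apply_eq_vecMul, ← mulVec_transpose]
    rfl
  set g : Fin n → ℝ := fun j => Xᵀ *ᵥ U.col j ⬝ᵥ Xᵀ *ᵥ U.col j with hg
  have hg1 : ∀ j : Fin n, ↑j < ρ → g j = 1 := fun j hj => by
    calc Xᵀ *ᵥ U.col j ⬝ᵥ Xᵀ *ᵥ U.col j = U.col j ⬝ᵥ X *ᵥ (Xᵀ *ᵥ U.col j) := by
          rw [dotProduct_mulVec, ← mulVec_transpose, transpose_transpose, dotProduct_comm]
      _ = 1 := by rw [hrange j hj, hU.col_dotProduct_col]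
  have hsum : ∑ j, g j = ρ := by
    rw [← htr, show Xᵀ * U * Uᵀ * X = (Uᵀ * X)ᵀ * (Uᵀ * X) by
      rw [transpose_mul, transpose_transpose]; simp only [Matrix.mul_assoc],
      trace_transpose_mul_eq_sum]
    simp only [hg, ← hrow, dotProduct]
  have hg0 : ∀ j, 0 ≤ g j := fun j => Finset.sum_nonneg fun k _ => mul_self_nonneg _
  exact dotProduct_self_eq_zero.mp (Fin.eq_zero_of_sum_eq_of_eq_one_of_lt hρ hg0 hg1 hsum hi)

end Stiefel

lemma rank_mul_diagonal_ite_lt_mul_transpose_le {m n : ℕ} (U : Matrix (Fin m) (Fin n) ℝ)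
    (d : Fin n → ℝ) (ρ : ℕ) :
    (U * diagonal (fun i : Fin n => if ↑i < ρ then d i else 0) * Uᵀ).rank ≤ ρ := by
  classical
  refine ((rank_mul_le_left _ _).trans (rank_mul_le_right _ _)).trans ?_
  rw [rank_diagonal, Fintype.card_subtype]
  calc (Finset.univ.filter fun i : Fin n => (if ↑i < ρ then d i else 0) ≠ 0).card
      ≤ (Finset.univ.filter fun i : Fin n => ↑i < ρ).card := by
        refine Finset.card_le_card (Finset.monotone_filter_right _ fun i _ hi => ?_)
        by_contra h
        exact hi (if_neg h)
    _ ≤ ρ := by rw [Fin.card_filter_val_lt]; exact min_le_right _ _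

lemma Stiefel.rank_le_of_mul_mul_transpose_eq {m r : ℕ} {X : Matrix (Fin m) (Fin r) ℝ}
    (hX : Stiefel X) {Θ : Matrix (Fin r) (Fin r) ℝ} {B : Matrix (Fin m) (Fin m) ℝ}
    (hfac : X * Θ * Xᵀ = B) : Θ.rank ≤ B.rank := by
  have hΘ : Θ = Xᵀ * B * X := by
    rw [← hfac, Matrix.mul_assoc, Matrix.mul_assoc, Matrix.mul_assoc, hX, Matrix.mul_one,
      ← Matrix.mul_assoc, hX, Matrix.one_mul]
  rw [hΘ]
  exact (rank_mul_le_left _ _).trans (rank_mul_le_right _ _)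

lemma exists_dotProduct_self_eq_one_mulVec_eq_zero {r : ℕ} {M : Matrix (Fin r) (Fin r) ℝ}
    (h : M.rank < r) : ∃ z, z ⬝ᵥ z = 1 ∧ M *ᵥ z = 0 := by
  have hdet : M.det = 0 := by
    by_contra hdet
    have := M.rank_of_isUnit ((isUnit_iff_isUnit_det M).mpr (isUnit_iff_ne_zero.mpr hdet))
    rw [Fintype.card_fin] at this
    omega
  obtain ⟨v, hv, hMv⟩ := exists_mulVec_eq_zero_iff.mpr hdet
  have hvv : 0 < v ⬝ᵥ v :=
    lt_of_le_of_ne (Finset.sum_nonneg fun i _ => mul_self_nonneg _)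
      (Ne.symm (dotProduct_self_eq_zero.not.mpr hv))
  refine ⟨(√(v ⬝ᵥ v))⁻¹ • v, ?_, by rw [mulVec_smul, hMv, smul_zero]⟩
  rw [smul_dotProduct, dotProduct_smul, smul_eq_mul, smul_eq_mul, ← mul_assoc, ← mul_inv,
    Real.mul_self_sqrt hvv.le, inv_mul_cancel₀ hvv.ne']

section Rotation

variable {m r : ℕ} {X : Matrix (Fin m) (Fin r) ℝ} {z : Fin r → ℝ} {u : Fin m → ℝ}

/-- Turns the column direction `X *ᵥ z` of `X` by the angle `t` towards `u`. -/
def stiefelRotation (X : Matrix (Fin m) (Fin r) ℝ) (z : Fin r → ℝ) (u : Fin m → ℝ) (t : ℝ) :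
    Matrix (Fin m) (Fin r) ℝ :=
  X + vecMulVec ((Real.cos t - 1) • X *ᵥ z + Real.sin t • u) z

lemma stiefelRotation_mulVec (hz : z ⬝ᵥ z = 1) (t : ℝ) :
    stiefelRotation X z u t *ᵥ z = Real.cos t • X *ᵥ z + Real.sin t • u := by
  rw [stiefelRotation, add_mulVec, vecMulVec_mulVec, hz]
  ext i
  simp only [Pi.add_apply, Pi.smul_apply, smul_eq_mul, MulOpposite.op_one, one_smul]
  ring

lemma stiefelRotation_mul_mul_transpose {Θ : Matrix (Fin r) (Fin r) ℝ} (hΘ : Θ.IsSymm)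
    (hΘz : Θ *ᵥ z = 0) (t : ℝ) :
    stiefelRotation X z u t * Θ * (stiefelRotation X z u t)ᵀ = X * Θ * Xᵀ := by
  have hzΘ : ∀ w : Fin m → ℝ, vecMulVec w z * Θ = 0 := fun w => by
    rw [vecMulVec_mul, ← mulVec_transpose, hΘ, hΘz]
    ext; simp [vecMulVec_apply]
  have hXΘz : ∀ w : Fin m → ℝ, X * Θ * vecMulVec z w = 0 := fun w => by
    rw [mul_vecMulVec, ← mulVec_mulVec, hΘz, mulVec_zero]
    ext; simp [vecMulVec_apply]
  rw [stiefelRotation, Matrix.add_mul, hzΘ, add_zero, transpose_add, Matrix.mul_add,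
    transpose_vecMulVec, hXΘz, add_zero]

lemma transpose_mulVec_rotation_dir (hX : Stiefel X) (hXu : Xᵀ *ᵥ u = 0) (t : ℝ) :
    Xᵀ *ᵥ ((Real.cos t - 1) • X *ᵥ z + Real.sin t • u) = (Real.cos t - 1) • z := by
  rw [mulVec_add, mulVec_smul, mulVec_smul, mulVec_mulVec, hX, one_mulVec, hXu, smul_zero,
    add_zero]

lemma rotation_dir_dotProduct_self (hX : Stiefel X) (hz : z ⬝ᵥ z = 1) (hu : u ⬝ᵥ u = 1)
    (hXu : Xᵀ *ᵥ u = 0) (t : ℝ) :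
    ((Real.cos t - 1) • X *ᵥ z + Real.sin t • u) ⬝ᵥ ((Real.cos t - 1) • X *ᵥ z + Real.sin t • u)
      = 2 - 2 * Real.cos t := by
  have hxx : X *ᵥ z ⬝ᵥ X *ᵥ z = 1 := by rw [hX.mulVec_dotProduct_mulVec, hz]
  have hxu : X *ᵥ z ⬝ᵥ u = 0 := by
    rw [dotProduct_comm, dotProduct_mulVec, ← mulVec_transpose, hXu, zero_dotProduct]
  simp only [add_dotProduct, dotProduct_add, smul_dotProduct, dotProduct_smul, smul_eq_mul,
    hxx, hxu, dotProduct_comm u (X *ᵥ z), hu]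
  nlinarith [Real.sin_sq_add_cos_sq t]

lemma Stiefel.stiefelRotation (hX : Stiefel X) (hz : z ⬝ᵥ z = 1) (hu : u ⬝ᵥ u = 1)
    (hXu : Xᵀ *ᵥ u = 0) (t : ℝ) : Stiefel (stiefelRotation X z u t) := by
  have hXw := transpose_mulVec_rotation_dir (z := z) hX hXu t
  have hww := rotation_dir_dotProduct_self hX hz hu hXu t
  rw [Stiefel, _root_.stiefelRotation, transpose_add, Matrix.add_mul, Matrix.mul_add,
    Matrix.mul_add, hX, transpose_vecMulVec, mul_vecMulVec, vecMulVec_mul, ← mulVec_transpose,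
    vecMulVec_mul_vecMulVec, hXw, hww, smul_vecMulVec, vecMulVec_smul, vecMulVec_smul,
    add_assoc, ← add_smul, ← add_smul,
    show Real.cos t - 1 + (Real.cos t - 1 + (2 - 2 * Real.cos t)) = 0 by ring, zero_smul,
    add_zero]

lemma frob_stiefelRotation_sub_sq (hX : Stiefel X) (hz : z ⬝ᵥ z = 1) (hu : u ⬝ᵥ u = 1)
    (hXu : Xᵀ *ᵥ u = 0) (t : ℝ) :
    frob (stiefelRotation X z u t - X) ^ 2 = 2 - 2 * Real.cos t := by
  rw [stiefelRotation, add_sub_cancel_left, frob_vecMulVec_sq,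
    rotation_dir_dotProduct_self hX hz hu hXu, hz, mul_one]

end Rotation

section Loss

variable {m r : ℕ}

def populationLoss (A : Matrix (Fin m) (Fin m) ℝ) (X : Matrix (Fin m) (Fin r) ℝ)
    (Θ : Matrix (Fin r) (Fin r) ℝ) : ℝ :=
  1 / 4 * frob (X * Θ * Xᵀ - A) ^ 2

lemma mul_add_smul_vecMulVec_mul_transpose (Y : Matrix (Fin m) (Fin r) ℝ)
    (Θ : Matrix (Fin r) (Fin r) ℝ) (s : ℝ) (z : Fin r → ℝ) :
    Y * (Θ + s • vecMulVec z z) * Yᵀ = Y * Θ * Yᵀ + s • vecMulVec (Y *ᵥ z) (Y *ᵥ z) := by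
  rw [Matrix.mul_add, Matrix.add_mul, Matrix.mul_smul, Matrix.smul_mul, mul_vecMulVec,
    vecMulVec_mul, vecMul_transpose]

lemma populationLoss_add_smul_vecMulVec (A : Matrix (Fin m) (Fin m) ℝ)
    {Y : Matrix (Fin m) (Fin r) ℝ} (hY : Stiefel Y) (Θ : Matrix (Fin r) (Fin r) ℝ) (s : ℝ)
    {z : Fin r → ℝ} (hz : z ⬝ᵥ z = 1) :
    populationLoss A Y (Θ + s • vecMulVec z z) = populationLoss A Y Θ +
      (2 * s * (Y *ᵥ z ⬝ᵥ (Y * Θ * Yᵀ - A) *ᵥ (Y *ᵥ z)) + s ^ 2) / 4 := by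
  have hYz : Y *ᵥ z ⬝ᵥ Y *ᵥ z = 1 := by rw [hY.mulVec_dotProduct_mulVec, hz]
  rw [populationLoss, populationLoss, mul_add_smul_vecMulVec_mul_transpose, add_sub_right_comm,
    frob_add_smul_vecMulVec_self_sq _ _ hYz]
  ring

lemma Matrix.IsSymm.add_smul_vecMulVec_self {Θ : Matrix (Fin r) (Fin r) ℝ} (hΘ : Θ.IsSymm)
    (s : ℝ) (z : Fin r → ℝ) : (Θ + s • vecMulVec z z).IsSymm :=
  hΘ.add (IsSymm.smul (transpose_vecMulVec z z) s)

variable {A : Matrix (Fin m) (Fin m) ℝ} {X : Matrix (Fin m) (Fin r) ℝ}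
  {Θ : Matrix (Fin r) (Fin r) ℝ} {z : Fin r → ℝ} {u : Fin m → ℝ} {lam ν : ℝ}

lemma exists_near_populationLoss_gt (hX : Stiefel X) (hΘ : Θ.IsSymm) (hz : z ⬝ᵥ z = 1)
    (hcrit : Xᵀ * (X * Θ * Xᵀ - A) * X = 0) (hν : 0 < ν) :
    ∃ Xp Θp, Stiefel Xp ∧ Θp.IsSymm ∧ √(frob (Xp - X) ^ 2 + frob (Θp - Θ) ^ 2) ≤ ν ∧
      populationLoss A X Θ < populationLoss A Xp Θp := by
  refine ⟨X, Θ + ν • vecMulVec z z, hX, hΘ.add_smul_vecMulVec_self ν z, ?_, ?_⟩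
  · rw [sub_self, add_sub_cancel_left, frob_smul_sq, frob_vecMulVec_sq, hz, frob_sq]
    simp [Real.sqrt_sq hν.le]
  · have hflat : X *ᵥ z ⬝ᵥ (X * Θ * Xᵀ - A) *ᵥ (X *ᵥ z) = 0 := by
      calc X *ᵥ z ⬝ᵥ (X * Θ * Xᵀ - A) *ᵥ (X *ᵥ z)
          = z ⬝ᵥ (Xᵀ * (X * Θ * Xᵀ - A) * X) *ᵥ z := by
            rw [← mulVec_mulVec, ← mulVec_mulVec, dotProduct_mulVec z, vecMul_transpose]
        _ = 0 := by rw [hcrit, zero_mulVec, dotProduct_zero]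
    rw [populationLoss_add_smul_vecMulVec A hX Θ ν hz, hflat]
    nlinarith

lemma exists_near_populationLoss_lt (hX : Stiefel X) (hΘ : Θ.IsSymm) (hz : z ⬝ᵥ z = 1)
    (hΘz : Θ *ᵥ z = 0) (hu : u ⬝ᵥ u = 1) (hXu : Xᵀ *ᵥ u = 0) (hlam : 0 < lam)
    (hEX : (X * Θ * Xᵀ - A) * X = 0) (hEu : (X * Θ * Xᵀ - A) *ᵥ u = -lam • u) (hν : 0 < ν) :
    ∃ Xm Θm, Stiefel Xm ∧ Θm.IsSymm ∧ √(frob (Xm - X) ^ 2 + frob (Θm - Θ) ^ 2) ≤ ν ∧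
      populationLoss A Xm Θm < populationLoss A X Θ := by
  set t := min (ν / 2) 1
  set s := min (ν / 2) (lam * Real.sin t ^ 2)
  have ht : 0 < t := lt_min (by linarith) one_pos
  have hsin : 0 < Real.sin t :=
    Real.sin_pos_of_pos_of_lt_pi ht (by linarith [min_le_right (ν / 2) 1, Real.pi_gt_three])
  have hs : 0 < s := lt_min (by linarith) (by positivity)
  have hR := hX.stiefelRotation hz hu hXu t
  refine ⟨stiefelRotation X z u t, Θ + s • vecMulVec z z, hR, hΘ.add_smul_vecMulVec_self s z,
    ?_, ?_⟩
  · rw [add_sub_cancel_left, frob_smul_sq, frob_vecMulVec_sq, hz,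
      frob_stiefelRotation_sub_sq hX hz hu hXu, Real.sqrt_le_left hν.le]
    nlinarith [Real.one_sub_sq_div_two_le_cos (x := t), min_le_left (ν / 2) 1,
      min_le_left (ν / 2) (lam * Real.sin t ^ 2)]
  · have hEx : (X * Θ * Xᵀ - A) *ᵥ (X *ᵥ z) = 0 := by
      rw [mulVec_mulVec, hEX, zero_mulVec]
    have hxu : X *ᵥ z ⬝ᵥ u = 0 := by
      rw [dotProduct_comm, dotProduct_mulVec, ← mulVec_transpose, hXu, zero_dotProduct]
    have hslope : stiefelRotation X z u t *ᵥ z ⬝ᵥ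
        (stiefelRotation X z u t * Θ * (stiefelRotation X z u t)ᵀ - A) *ᵥ
          (stiefelRotation X z u t *ᵥ z) = -(lam * Real.sin t ^ 2) := by
      rw [stiefelRotation_mul_mul_transpose hΘ hΘz, stiefelRotation_mulVec hz, mulVec_add,
        mulVec_smul, mulVec_smul, hEx, hEu]
      simp only [smul_zero, zero_add, dotProduct_smul, add_dotProduct, smul_dotProduct, hxu, hu,
        smul_eq_mul]
      ring
    have hsame : populationLoss A (stiefelRotation X z u t) Θ = populationLoss A X Θ := by
      rw [populationLoss, populationLoss, stiefelRotation_mul_mul_transpose hΘ hΘz]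
    rw [populationLoss_add_smul_vecMulVec A hR Θ s hz, hslope, hsame]
    nlinarith [min_le_right (ν / 2) (lam * Real.sin t ^ 2), mul_pos hlam (pow_pos hsin 2)]

end Loss

theorem stmt9 {m r r_A : ℕ} (h2 : r_A ≤ r)
    (lam : Fin r_A → ℝ) (hlam_pos : ∀ i, 0 < lam i)
    (U : Matrix (Fin m) (Fin r_A) ℝ) (hU : Stiefel U)
    (A : Matrix (Fin m) (Fin m) ℝ) (hA : A = U * Matrix.diagonal lam * Uᵀ)
    (ρ : ℕ) (hρ : ρ < r_A)
    (Aρ : Matrix (Fin m) (Fin m) ℝ)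
    (hAρ : Aρ = U * Matrix.diagonal (fun i : Fin r_A => if (i : ℕ) < ρ then lam i else 0) * Uᵀ)
    (X : Matrix (Fin m) (Fin r) ℝ) (hX : Stiefel X)
    (Θ : Matrix (Fin r) (Fin r) ℝ) (hΘsym : Θ.IsSymm)
    (hfac : X * Θ * Xᵀ = Aρ) (htr : (Xᵀ * U * Uᵀ * X).trace = (ρ : ℝ)) :
    ((2⁻¹ : ℝ) • (Xᵀ * (X * Θ * Xᵀ - A) * X) = 0) ∧
    (Rgrad X ((X * Θ * Xᵀ - A) * X * Θ) = 0) ∧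
    (∀ ν : ℝ, 0 < ν → ν < lam ⟨r_A - 1, by omega⟩ →
      ((∃ Xp : Matrix (Fin m) (Fin r) ℝ, ∃ Θp : Matrix (Fin r) (Fin r) ℝ,
          Xpᵀ * Xp = 1 ∧ Θp.IsSymm ∧
          Real.sqrt (frob (Xp - X) ^ 2 + frob (Θp - Θ) ^ 2) ≤ ν ∧
          (1 / 4) * frob (X * Θ * Xᵀ - A) ^ 2 < (1 / 4) * frob (Xp * Θp * Xpᵀ - A) ^ 2) ∧
       (∃ Xm : Matrix (Fin m) (Fin r) ℝ, ∃ Θm : Matrix (Fin r) (Fin r) ℝ,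
          Xmᵀ * Xm = 1 ∧ Θm.IsSymm ∧
          Real.sqrt (frob (Xm - X) ^ 2 + frob (Θm - Θ) ^ 2) ≤ ν ∧
          (1 / 4) * frob (Xm * Θm * Xmᵀ - A) ^ 2 < (1 / 4) * frob (X * Θ * Xᵀ - A) ^ 2))) := by
  set dρ : Fin r_A → ℝ := fun i => if (i : ℕ) < ρ then lam i else 0
  have hXu : ∀ i : Fin r_A, ρ ≤ ↑i → Xᵀ *ᵥ U.col i = 0 := fun i =>
    hX.transpose_mulVec_col_eq_zero hU hρ.le (fun j hj => by simp [dρ, hj, (hlam_pos j).ne'])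
      (hfac.trans hAρ) htr
  have hres : X * Θ * Xᵀ - A = U * diagonal (dρ - lam) * Uᵀ := by
    rw [hfac, hAρ, hA, ← Matrix.sub_mul, ← Matrix.mul_sub, diagonal_sub]
    rfl
  have hEX : (X * Θ * Xᵀ - A) * X = 0 := by
    rw [hres]
    refine mul_diagonal_mul_transpose_mul_eq_zero fun i hi => hXu i (not_lt.mp fun h => hi ?_)
    simp [dρ, h]
  have hcrit : Xᵀ * (X * Θ * Xᵀ - A) * X = 0 := by rw [Matrix.mul_assoc, hEX, Matrix.mul_zero]
  have hrank : Θ.rank < r :=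
    ((hX.rank_le_of_mul_mul_transpose_eq (hfac.trans hAρ)).trans
      (rank_mul_diagonal_ite_lt_mul_transpose_le U lam ρ)).trans_lt (hρ.trans_le h2)
  obtain ⟨z, hz, hΘz⟩ := exists_dotProduct_self_eq_one_mulVec_eq_zero hrank
  set iρ : Fin r_A := ⟨ρ, hρ⟩
  refine ⟨by rw [hcrit, smul_zero], by simp [hEX, Rgrad], fun ν hν _ =>
    ⟨exists_near_populationLoss_gt hX hΘsym hz hcrit hν,
      exists_near_populationLoss_lt hX hΘsym hz hΘz (hU.col_dotProduct_col iρ) (hXu iρ le_rfl)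
        (hlam_pos iρ) hEX ?_ hν⟩⟩
  rw [hres, hU.mul_diagonal_mul_transpose_mulVec_col]
  simp [dρ, iρ]
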